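/- Four-term relation for m₀: for every integer l ≥ 1 (and with the convention m₀(s, −1) := 0, for every l ≥ 0), m₀(s, l) + f_I(s) · m₀(s t², l−1) = m₀(s t, l) + m₀(s t, l−1), as an identity of rational functions in c, t, s; here f_I(σ) := (1−c⁴σ)(1−tσ)(1+tc²σ)(1+c²σ)/((1−c⁴σ²)(1−t²c⁴σ²)), which equals f(σ | t^{1/2}c, −t^{1/2}c, c, −c). -/

import Mathlib

/-!
Four-term relation for `m₀`, as an identity in the rational function field
ℚ(c,t,s).
-/

open Finset

noncomputable section

/-- The rational function field ℚ(c,t,s). -/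
abbrev RF : Type := FractionRing (MvPolynomial (Fin 3) ℚ)

def gen (i : Fin 3) : RF := algebraMap (MvPolynomial (Fin 3) ℚ) RF (MvPolynomial.X i)

def c : RF := gen 0
def t : RF := gen 1
def s : RF := gen 2

/-- The q-Pochhammer symbol (z;q)_k. -/
def qPoch (z q : RF) (k : ℕ) : RF := ∏ j ∈ Finset.range k, (1 - z * q ^ j)

/-- `f_I(σ) = f(σ|t^{1/2}c,−t^{1/2}c,c,−c)` in its cancelled closed form. -/
def fI (σ : RF) : RF :=
  ((1 - c^4*σ) * (1 - t*σ) * (1 + t*c^2*σ) * (1 + c^2*σ)) /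
  ((1 - c^4*σ^2) * (1 - t^2*c^4*σ^2))

/-- `m₀(s,l)` for `l ≥ 0`. -/
def m0 (S : RF) (l : ℕ) : RF :=
  ((qPoch (1/c^2) t l * qPoch (S/t) t l * qPoch S t (2*l)) /
    (qPoch t t l * qPoch (S*c^2) t l * qPoch (S/t) t (2*l))) * c^(2*l)

/-- `m₀` extended by the convention `m₀(s,l) = 0` for `l < 0`. -/
def m0Z (S : RF) (l : ℤ) : RF := if l < 0 then 0 else m0 S l.toNat


/-!
The factor `(S;t)_{2l} / (S/t;t)_{2l}` of `m₀(S,l)` telescopes to `(1 - S t^{2l-1}) / (1 - S/t)`.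
After this, each of `m₀(s,l)`, `m₀(st²,l-1)`, `m₀(st,l)` is `m₀(st,l-1)` times a rational
function of `c, t, s, t^{l-1}`, and dividing by `m₀(st,l-1)` leaves an identity of rational
functions that is checked by clearing denominators. The denominators are `t - s` and polynomials
`1 - c^a t^b s^d`, which are nonzero in `ℚ(c,t,s)` because they do not vanish at a rational point.
-/

theorem qPoch_succ (z q : RF) (k : ℕ) : qPoch z q (k + 1) = qPoch z q k * (1 - z * q ^ k) :=
  prod_range_succ _ _

theorem qPoch_succ' (z q : RF) (k : ℕ) : qPoch z q (k + 1) = (1 - z) * qPoch (z * q) q k := by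
  simp only [qPoch, prod_range_succ', pow_zero, mul_one, pow_succ, mul_assoc, mul_comm]

theorem qPoch_mul_base (z q : RF) (k : ℕ) (hz : 1 - z ≠ 0) :
    qPoch (z * q) q k = qPoch z q k * (1 - z * q ^ k) / (1 - z) := by
  rw [← qPoch_succ, qPoch_succ', mul_div_cancel_left₀ _ hz]

theorem algebraMap_ne_zero_of_eval_ne_zero (p : MvPolynomial (Fin 3) ℚ) (x : Fin 3 → ℚ)
    (h : MvPolynomial.eval x p ≠ 0) : algebraMap (MvPolynomial (Fin 3) ℚ) RF p ≠ 0 := by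
  refine (map_ne_zero_iff _ (IsFractionRing.injective _ RF)).mpr ?_
  rintro rfl
  simp at h

theorem c_ne_zero : c ≠ 0 :=
  algebraMap_ne_zero_of_eval_ne_zero _ (fun _ ↦ 1) (by simp)

theorem t_ne_zero : t ≠ 0 :=
  algebraMap_ne_zero_of_eval_ne_zero _ (fun _ ↦ 1) (by simp)

theorem t_sub_s_ne_zero : t - s ≠ 0 :=
  algebraMap_ne_zero_of_eval_ne_zero (MvPolynomial.X 1 - MvPolynomial.X 2) ![0, 1, 0] (by simp)
    |> ne_of_eq_of_ne (by simp [t, s, gen])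

theorem one_sub_s_div_t_ne_zero : 1 - s / t ≠ 0 := by
  rw [one_sub_div t_ne_zero]
  exact div_ne_zero t_sub_s_ne_zero t_ne_zero

theorem one_sub_monomial_ne_zero (a b d : ℕ) (h : a + b + d ≠ 0) :
    (1 : RF) - c ^ a * t ^ b * s ^ d ≠ 0 := by
  have hx : (1 : RF) - c ^ a * t ^ b * s ^ d = algebraMap (MvPolynomial (Fin 3) ℚ) RF
      (1 - MvPolynomial.X 0 ^ a * MvPolynomial.X 1 ^ b * MvPolynomial.X 2 ^ d) := by
    simp [c, t, s, gen]
  rw [hx]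
  refine algebraMap_ne_zero_of_eval_ne_zero _ (fun _ ↦ 1 / 2) ?_
  have : (1 / 2 : ℚ) ^ (a + b + d) < 1 := pow_lt_one₀ (by norm_num) (by norm_num) h
  simp only [map_sub, map_one, map_mul, map_pow, MvPolynomial.eval_X, ← pow_add]
  exact sub_ne_zero.mpr this.ne'

theorem qPoch_monomial_ne_zero (a b d : ℕ) (h : a + b + d ≠ 0) (k : ℕ) :
    qPoch (c ^ a * t ^ b * s ^ d) t k ≠ 0 :=
  prod_ne_zero_iff.mpr fun j _ ↦ ne_of_eq_of_ne (by ring)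
    (one_sub_monomial_ne_zero a (b + j) d (by omega))

theorem one_sub_s_mul_t_pow_ne_zero (k : ℕ) : (1 : RF) - s * t ^ k ≠ 0 :=
  ne_of_eq_of_ne (by ring) (one_sub_monomial_ne_zero 0 k 1 (by omega))

theorem one_sub_s_mul_c_sq_mul_t_pow_ne_zero (k : ℕ) : (1 : RF) - s * c ^ 2 * t ^ k ≠ 0 :=
  ne_of_eq_of_ne (by ring) (one_sub_monomial_ne_zero 2 k 1 (by omega))

theorem one_sub_t_pow_succ_ne_zero (k : ℕ) : (1 : RF) - t ^ (k + 1) ≠ 0 :=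
  ne_of_eq_of_ne (by ring) (one_sub_monomial_ne_zero 0 (k + 1) 0 (by omega))

theorem one_sub_s_ne_zero : (1 : RF) - s ≠ 0 := by
  simpa using one_sub_s_mul_t_pow_ne_zero 0

theorem one_sub_s_mul_t_ne_zero : (1 : RF) - s * t ≠ 0 := by
  simpa using one_sub_s_mul_t_pow_ne_zero 1

theorem one_sub_s_mul_c_sq_ne_zero : (1 : RF) - s * c ^ 2 ≠ 0 := by
  simpa using one_sub_s_mul_c_sq_mul_t_pow_ne_zero 0

theorem one_sub_s_mul_t_mul_c_sq_ne_zero : (1 : RF) - s * t * c ^ 2 ≠ 0 :=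
  ne_of_eq_of_ne (by ring) (one_sub_s_mul_c_sq_mul_t_pow_ne_zero 1)

theorem qPoch_s_ne_zero (k : ℕ) : qPoch s t k ≠ 0 := by
  simpa using qPoch_monomial_ne_zero 0 0 1 one_ne_zero k

theorem qPoch_s_mul_t_ne_zero (k : ℕ) : qPoch (s * t) t k ≠ 0 :=
  ne_of_eq_of_ne (by ring_nf) (qPoch_monomial_ne_zero 0 1 1 (by omega) k)

theorem m0_mul_t (z : RF) (l : ℕ) (hz : 1 - z ≠ 0) (hq : qPoch z t (2 * l) ≠ 0) :
    m0 (z * t) l = qPoch (1 / c ^ 2) t l * qPoch z t l / (qPoch t t l * qPoch (z * t * c ^ 2) t l) *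
      c ^ (2 * l) * ((1 - z * t ^ (2 * l)) / (1 - z)) := by
  rw [m0, mul_div_cancel_right₀ z t_ne_zero, qPoch_mul_base z t _ hz]
  field_simp

theorem m0_s_mul_t (n : ℕ) :
    m0 (s * t) n = qPoch (1 / c ^ 2) t n * qPoch s t n / (qPoch t t n * qPoch (s * t * c ^ 2) t n) *
      c ^ (2 * n) * ((1 - s * t ^ (2 * n)) / (1 - s)) :=
  m0_mul_t s n one_sub_s_ne_zero (qPoch_s_ne_zero _)

theorem m0_s_succ (n : ℕ) :
    m0 s (n + 1) = m0 (s * t) n * ((c ^ 2 - t ^ n) * (1 - s * t ^ (2 * n + 1)) * (1 - s) /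
      ((1 - t ^ (n + 1)) * (1 - s * c ^ 2) * (1 - s * t ^ (2 * n)))) := by
  have h := m0_mul_t (s / t) (n + 1) one_sub_s_div_t_ne_zero (by
    rw [show 2 * (n + 1) = 2 * n + 1 + 1 by ring, qPoch_succ', div_mul_cancel₀ s t_ne_zero]
    exact mul_ne_zero one_sub_s_div_t_ne_zero (qPoch_s_ne_zero _))
  rw [div_mul_cancel₀ s t_ne_zero, qPoch_succ' (s / t), div_mul_cancel₀ s t_ne_zero,
    qPoch_succ' (s * c ^ 2), qPoch_succ, qPoch_succ t, ← pow_succ',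
    show s * c ^ 2 * t = s * t * c ^ 2 by ring] at h
  rw [h, m0_s_mul_t]
  field_simp [one_sub_s_ne_zero, t_sub_s_ne_zero, c_ne_zero, t_ne_zero,
    one_sub_s_mul_t_pow_ne_zero]
  ring

theorem m0_s_mul_t_sq (n : ℕ) :
    m0 (s * t ^ 2) n = m0 (s * t) n *
      ((1 - s * t ^ n) * (1 - s * t * c ^ 2) * (1 - s * t ^ (2 * n + 1)) /
        ((1 - s * t) * (1 - s * c ^ 2 * t ^ (n + 1)) * (1 - s * t ^ (2 * n)))) := by
  have h := m0_mul_t (s * t) n one_sub_s_mul_t_ne_zero (qPoch_s_mul_t_ne_zero _)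
  rw [show s * t * t = s * t ^ 2 by ring, qPoch_mul_base s t n one_sub_s_ne_zero,
    show s * t ^ 2 * c ^ 2 = s * t * c ^ 2 * t by ring,
    qPoch_mul_base _ t n one_sub_s_mul_t_mul_c_sq_ne_zero] at h
  rw [h, m0_s_mul_t]
  field_simp [one_sub_s_mul_t_pow_ne_zero]
  ring

theorem m0_s_mul_t_succ (n : ℕ) :
    m0 (s * t) (n + 1) = m0 (s * t) n *
      ((c ^ 2 - t ^ n) * (1 - s * t ^ n) * (1 - s * t ^ (2 * n + 2)) /
        ((1 - t ^ (n + 1)) * (1 - s * c ^ 2 * t ^ (n + 1)) * (1 - s * t ^ (2 * n)))) := by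
  rw [m0_s_mul_t, m0_s_mul_t, qPoch_succ s, qPoch_succ (s * t * c ^ 2), qPoch_succ t,
    qPoch_succ (1 / c ^ 2), ← pow_succ']
  field_simp [c_ne_zero, one_sub_s_mul_t_pow_ne_zero]
  ring

theorem fI_s_eq :
    fI s = (1 - c ^ 4 * s) * (1 - s * t) / ((1 - s * c ^ 2) * (1 - s * t * c ^ 2)) := by
  have h₁ : (1 : RF) - c ^ 4 * s ^ 2 ≠ 0 :=
    ne_of_eq_of_ne (by ring) (one_sub_monomial_ne_zero 4 0 2 (by omega))
  have h₂ : (1 : RF) - t ^ 2 * c ^ 4 * s ^ 2 ≠ 0 :=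
    ne_of_eq_of_ne (by ring) (one_sub_monomial_ne_zero 4 2 2 (by omega))
  rw [fI, div_eq_div_iff (mul_ne_zero h₁ h₂)
    (mul_ne_zero one_sub_s_mul_c_sq_ne_zero one_sub_s_mul_t_mul_c_sq_ne_zero)]
  ring

theorem four_term_ratios (n : ℕ) :
    (c ^ 2 - t ^ n) * (1 - s * t ^ (2 * n + 1)) * (1 - s) /
      ((1 - t ^ (n + 1)) * (1 - s * c ^ 2) * (1 - s * t ^ (2 * n))) +
    fI s * ((1 - s * t ^ n) * (1 - s * t * c ^ 2) * (1 - s * t ^ (2 * n + 1)) /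
      ((1 - s * t) * (1 - s * c ^ 2 * t ^ (n + 1)) * (1 - s * t ^ (2 * n)))) =
    (c ^ 2 - t ^ n) * (1 - s * t ^ n) * (1 - s * t ^ (2 * n + 2)) /
      ((1 - t ^ (n + 1)) * (1 - s * c ^ 2 * t ^ (n + 1)) * (1 - s * t ^ (2 * n))) + 1 := by
  have hB₁ := mul_ne_zero
    (mul_ne_zero (one_sub_t_pow_succ_ne_zero n) one_sub_s_mul_c_sq_ne_zero)
    (one_sub_s_mul_t_pow_ne_zero (2 * n))
  have hB₂ := mul_ne_zero
    (mul_ne_zero one_sub_s_mul_c_sq_ne_zero one_sub_s_mul_t_mul_c_sq_ne_zero)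
    (mul_ne_zero (mul_ne_zero one_sub_s_mul_t_ne_zero
      (one_sub_s_mul_c_sq_mul_t_pow_ne_zero (n + 1))) (one_sub_s_mul_t_pow_ne_zero (2 * n)))
  have hB₃ := mul_ne_zero (mul_ne_zero (one_sub_t_pow_succ_ne_zero n)
    (one_sub_s_mul_c_sq_mul_t_pow_ne_zero (n + 1))) (one_sub_s_mul_t_pow_ne_zero (2 * n))
  rw [fI_s_eq, div_mul_div_comm, div_add_div _ _ hB₁ hB₂, div_add_one hB₃,
    div_eq_div_iff (mul_ne_zero hB₁ hB₂) hB₃]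
  ring

theorem m0Z_natCast (S : RF) (n : ℕ) : m0Z S n = m0 S n := by
  simp [m0Z]

theorem m0_four_term_general (l : ℤ) :
    m0Z s l + fI s * m0Z (s*t^2) (l-1) =
    m0Z (s*t) l + m0Z (s*t) (l-1) := by
  rcases l with (_ | n) | n
  · simp [m0Z, m0, qPoch]
  · have hl : ((n + 1 : ℕ) : ℤ) - 1 = n := by omega
    simp only [Int.ofNat_eq_natCast, hl, m0Z_natCast]
    rw [m0_s_succ, m0_s_mul_t_sq, m0_s_mul_t_succ]
    linear_combination m0 (s * t) n * four_term_ratios n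
  · simp [m0Z]

/-- Four-term relation for `m₀`:
`m₀(s,l) + f_I(s) m₀(st²,l−1) = m₀(st,l) + m₀(st,l−1)`. -/
theorem m0_four_term (l : ℤ) (hl : 0 ≤ l) :
    m0Z s l + fI s * m0Z (s*t^2) (l-1) =
    m0Z (s*t) l + m0Z (s*t) (l-1) :=
  m0_four_term_general l

end
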